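/- For all natural numbers m and n with m + n odd or m < n, and for all real t, Σ_{k=0}^{m} Σ_{j=0}^{n} (−1)^{k+j} · (H_{k,j}(t) / (k!·j!)) · (H_{m−k,n−j}(t) / ((m−k)!·(n−j)!)) = 0. -/
import Mathlib

open Polynomial Finset

noncomputable def A (p : ℝ[X]) : ℝ[X] := 2 * X * p - derivative p

noncomputable def H (m n : ℕ) : ℝ[X] := A^[m] (X ^ n)

lemma A_sub (p q : ℝ[X]) : A (p - q) = A p - A q := by
  simp [A]; ring

lemma A_C_mul (c : ℝ) (p : ℝ[X]) : A (C c * p) = C c * A p := by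
  simp [A]; ring

lemma A_X_mul (p : ℝ[X]) : A (X * p) = X * A p - p := by
  simp [A, derivative_mul]; ring

lemma H_succ_left (m n : ℕ) : H (m+1) n = A (H m n) := by
  simp [H, Function.iterate_succ_apply']

lemma H_zero_left (n : ℕ) : H 0 n = X ^ n := rfl

lemma H_succ_right (m n : ℕ) : H m (n+1) = X * H m n - C (m:ℝ) * H (m-1) n := by
  induction m generalizing n with
  | zero => simp [H_zero_left, pow_succ]; ring
  | succ m ih =>
    rw [H_succ_left, ih, A_sub, A_X_mul, A_C_mul, ← H_succ_left]
    cases m with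
    | zero => simp [← H_succ_left]
    | succ m =>
      rw [Nat.add_sub_cancel, Nat.add_sub_cancel, ← H_succ_left]
      push_cast
      simp [C_add, C_1]; ring

lemma evalH_succ_right (t : ℝ) (m n : ℕ) :
    (H m (n+1)).eval t = t * (H m n).eval t - (m:ℝ) * (H (m-1) n).eval t := by
  rw [H_succ_right]; simp

/-- abbreviation for evaluated Hermite -/
noncomputable def hh (t : ℝ) (k j : ℕ) : ℝ := (H k j).eval t

/-- the summand -/
noncomputable def f (t : ℝ) (p q : ℕ × ℕ) : ℝ :=
  (-1:ℝ)^(p.1+q.1) * (hh t p.1 q.1 / ((p.1.factorial : ℝ) * (q.1.factorial : ℝ)))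
    * (hh t p.2 q.2 / ((p.2.factorial : ℝ) * (q.2.factorial : ℝ)))

/-- the double alternating sum -/
noncomputable def S (t : ℝ) (m n : ℕ) : ℝ :=
  ∑ p ∈ antidiagonal m, ∑ q ∈ antidiagonal n, f t p q

lemma hh_succ (t : ℝ) (k j : ℕ) :
    hh t k (j+1) = t * hh t k j - (k:ℝ) * hh t (k-1) j := evalH_succ_right t k j

lemma fac_ne (k : ℕ) : ((k.factorial : ℝ)) ≠ 0 :=
  Nat.cast_ne_zero.mpr k.factorial_ne_zero

lemma S_odd (t : ℝ) {m n : ℕ} (h : Odd (m + n)) : S t m n = 0 := by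
  have key : S t m n = - S t m n := by
    conv_lhs => rw [S]
    rw [← Finset.Nat.sum_antidiagonal_swap
      (f := fun p => ∑ q ∈ antidiagonal n, f t p q)]
    rw [show -S t m n = ∑ p ∈ antidiagonal m, ∑ q ∈ antidiagonal n, -(f t p q) by
      rw [S]; simp [Finset.sum_neg_distrib]]
    refine Finset.sum_congr rfl fun p hp => ?_
    rw [← Finset.Nat.sum_antidiagonal_swap (f := fun q => f t p.swap q)]
    refine Finset.sum_congr rfl fun q hq => ?_
    have hp' : p.1 + p.2 = m := Finset.HasAntidiagonal.mem_antidiagonal.mp hp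
    have hq' : q.1 + q.2 = n := Finset.HasAntidiagonal.mem_antidiagonal.mp hq
    have hsign : ((-1:ℝ))^(p.2+q.2) = -(-1:ℝ)^(p.1+q.1) := by
      rcases Nat.even_or_odd (p.1+q.1) with he | ho
      · have : Odd (p.2+q.2) := by
          rw [Nat.odd_iff] at h ⊢; rw [Nat.even_iff] at he; omega
        rw [Odd.neg_one_pow this, Even.neg_one_pow he]
      · have : Even (p.2+q.2) := by
          rw [Nat.odd_iff] at h ho; rw [Nat.even_iff]; omega
        rw [Even.neg_one_pow this, Odd.neg_one_pow ho]; ring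
    simp only [f, Prod.fst_swap, Prod.snd_swap, hsign]
    ring
  linarith

lemma S_zero_left (t : ℝ) {n : ℕ} (hn : n ≠ 0) : S t 0 n = 0 := by
  rw [S, Finset.Nat.antidiagonal_zero, Finset.sum_singleton,
    Finset.Nat.sum_antidiagonal_eq_sum_range_succ_mk]
  have key : ∀ j ∈ range (n+1),
      f t (0,0) (j, n - j) = (t^n / n.factorial) * ((-1:ℝ)^j * (n.choose j : ℝ)) := by
    intro j hj
    have hj' : j ≤ n := by simp at hj; omega
    have hc : ((n.choose j : ℝ)) * j.factorial * (n-j).factorial = n.factorial := by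
      exact_mod_cast Nat.choose_mul_factorial_mul_factorial hj'
    have ht : t^j * t^(n-j) = t^n := by rw [← pow_add]; congr 1; omega
    simp only [f, hh, H_zero_left, eval_pow, eval_X, Nat.factorial_zero, Nat.cast_one,
      one_mul, zero_add]
    field_simp
    rw [← hc, ← ht]; ring
  rw [Finset.sum_congr rfl key, ← Finset.mul_sum]
  have hz : ∑ j ∈ range (n+1), ((-1:ℝ)^j * (n.choose j : ℝ)) = 0 := by
    have := Int.alternating_sum_range_choose_of_ne hn
    exact_mod_cast this
  rw [hz, mul_zero]

/-- the two intermediate summands -/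
noncomputable def u (t : ℝ) (p q : ℕ × ℕ) : ℝ :=
  (-1:ℝ)^(p.1+q.1) * ((p.1:ℝ) * hh t (p.1-1) q.1 / ((p.1.factorial : ℝ) * (q.1.factorial : ℝ)))
    * (hh t p.2 q.2 / ((p.2.factorial : ℝ) * (q.2.factorial : ℝ)))
noncomputable def v (t : ℝ) (p q : ℕ × ℕ) : ℝ :=
  -((-1:ℝ)^(p.1+q.1) * (hh t p.1 q.1 / ((p.1.factorial : ℝ) * (q.1.factorial : ℝ)))
    * ((p.2:ℝ) * hh t (p.2-1) q.2 / ((p.2.factorial : ℝ) * (q.2.factorial : ℝ))))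

lemma S_rec (t : ℝ) (m n : ℕ) :
    ((n:ℝ)+1) * S t (m+1) (n+1) = -2 * S t m n := by
  have stepA : ∀ p : ℕ × ℕ, ∑ q ∈ antidiagonal (n+1), ((q.1:ℝ)) * f t p q
      = ∑ q ∈ antidiagonal n,
          (-((-1:ℝ)^(p.1+q.1) * ((t * hh t p.1 q.1 - (p.1:ℝ) * hh t (p.1-1) q.1)
              / ((p.1.factorial : ℝ) * (q.1.factorial : ℝ)))
            * (hh t p.2 q.2 / ((p.2.factorial : ℝ) * (q.2.factorial : ℝ))))) := by
    intro p
    rw [Finset.Nat.sum_antidiagonal_succ (f := fun q => ((q.1:ℝ)) * f t p q)]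
    simp only [Nat.cast_zero, zero_mul, zero_add]
    refine Finset.sum_congr rfl fun q hq => ?_
    simp only [f]
    rw [← hh_succ]
    rw [Nat.factorial_succ]
    push_cast
    have h1 := fac_ne q.1.factorial
    field_simp
    ring
  have stepB : ∀ p : ℕ × ℕ, ∑ q ∈ antidiagonal (n+1), ((q.2:ℝ)) * f t p q
      = ∑ q ∈ antidiagonal n,
          ((-1:ℝ)^(p.1+q.1) * (hh t p.1 q.1 / ((p.1.factorial : ℝ) * (q.1.factorial : ℝ)))
            * ((t * hh t p.2 q.2 - (p.2:ℝ) * hh t (p.2-1) q.2)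
              / ((p.2.factorial : ℝ) * (q.2.factorial : ℝ)))) := by
    intro p
    rw [Finset.Nat.sum_antidiagonal_succ' (f := fun q => ((q.2:ℝ)) * f t p q)]
    simp only [Nat.cast_zero, zero_mul, zero_add]
    refine Finset.sum_congr rfl fun q hq => ?_
    simp only [f]
    rw [← hh_succ]
    rw [Nat.factorial_succ]
    push_cast
    field_simp
  have stepU : ∑ p ∈ antidiagonal (m+1), ∑ q ∈ antidiagonal n, u t p q = - S t m n := by
    rw [Finset.Nat.sum_antidiagonal_succ (f := fun p => ∑ q ∈ antidiagonal n, u t p q)]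
    have h0 : ∑ q ∈ antidiagonal n, u t (0, m+1) q = 0 := by
      apply Finset.sum_eq_zero; intro q hq; simp [u]
    rw [h0, zero_add, S, ← Finset.sum_neg_distrib]
    refine Finset.sum_congr rfl fun p hp => ?_
    rw [← Finset.sum_neg_distrib]
    refine Finset.sum_congr rfl fun q hq => ?_
    simp only [u, f, Nat.add_sub_cancel]
    rw [Nat.factorial_succ, show p.1+1+q.1 = (p.1+q.1)+1 by ring, pow_succ]
    push_cast
    field_simp
  have stepV : ∑ p ∈ antidiagonal (m+1), ∑ q ∈ antidiagonal n, v t p q = - S t m n := by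
    rw [Finset.Nat.sum_antidiagonal_succ' (f := fun p => ∑ q ∈ antidiagonal n, v t p q)]
    have h0 : ∑ q ∈ antidiagonal n, v t (m+1, 0) q = 0 := by
      apply Finset.sum_eq_zero; intro q hq; simp [v]
    rw [h0, zero_add, S, ← Finset.sum_neg_distrib]
    refine Finset.sum_congr rfl fun p hp => ?_
    rw [← Finset.sum_neg_distrib]
    refine Finset.sum_congr rfl fun q hq => ?_
    simp only [v, f, Nat.add_sub_cancel]
    rw [Nat.factorial_succ]
    push_cast
    field_simp
  calc ((n:ℝ)+1) * S t (m+1) (n+1)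
      = ∑ p ∈ antidiagonal (m+1), ∑ q ∈ antidiagonal (n+1),
          (((q.1:ℝ)) * f t p q + ((q.2:ℝ)) * f t p q) := by
        rw [S, Finset.mul_sum]
        refine Finset.sum_congr rfl fun p hp => ?_
        rw [Finset.mul_sum]
        refine Finset.sum_congr rfl fun q hq => ?_
        have hq' : q.1 + q.2 = n + 1 := Finset.HasAntidiagonal.mem_antidiagonal.mp hq
        have : ((q.1:ℝ) + (q.2:ℝ)) = (n:ℝ) + 1 := by exact_mod_cast congrArg (Nat.cast : ℕ → ℝ) hq'
        rw [← this]; ring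
    _ = ∑ p ∈ antidiagonal (m+1),
          ((∑ q ∈ antidiagonal (n+1), ((q.1:ℝ)) * f t p q)
            + ∑ q ∈ antidiagonal (n+1), ((q.2:ℝ)) * f t p q) := by
        refine Finset.sum_congr rfl fun p hp => ?_
        rw [Finset.sum_add_distrib]
    _ = ∑ p ∈ antidiagonal (m+1), ∑ q ∈ antidiagonal n, (u t p q + v t p q) := by
        refine Finset.sum_congr rfl fun p hp => ?_
        rw [stepA p, stepB p, ← Finset.sum_add_distrib]
        refine Finset.sum_congr rfl fun q hq => ?_
        simp only [u, v]
        ring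
    _ = -2 * S t m n := by
        rw [Finset.sum_congr rfl fun p (hp : p ∈ antidiagonal (m+1)) => Finset.sum_add_distrib,
          Finset.sum_add_distrib, stepU, stepV]
        ring


lemma S_lt (t : ℝ) : ∀ m n : ℕ, m < n → S t m n = 0 := by
  intro m
  induction m with
  | zero => intro n h; exact S_zero_left t (by omega)
  | succ m ih =>
    intro n h
    obtain ⟨n', rfl⟩ : ∃ n', n = n' + 1 := ⟨n - 1, by omega⟩
    have h2 := S_rec t m n'
    rw [ih n' (by omega)] at h2
    have hne : ((n':ℝ) + 1) ≠ 0 := by positivity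
    have h3 : ((n':ℝ) + 1) * S t (m+1) (n'+1) = 0 := by linarith
    rcases mul_eq_zero.mp h3 with h4 | h4
    · exact absurd h4 hne
    · exact h4

theorem hmn_alternating_sum (m n : ℕ) (h : Odd (m + n) ∨ m < n) (t : ℝ) :
    ∑ k ∈ range (m + 1), ∑ j ∈ range (n + 1),
      (-1 : ℝ) ^ (k + j) *
        ((H k j).eval t / ((k.factorial : ℝ) * (j.factorial : ℝ))) *
        ((H (m - k) (n - j)).eval t /
          (((m - k).factorial : ℝ) * ((n - j).factorial : ℝ))) = 0 := by
  have key : S t m n = 0 := by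
    rcases h with h | h
    · exact S_odd t h
    · exact S_lt t m n h
  have conv1 : (∑ k ∈ range (m + 1), ∑ j ∈ range (n + 1),
      (-1 : ℝ) ^ (k + j) *
        ((H k j).eval t / ((k.factorial : ℝ) * (j.factorial : ℝ))) *
        ((H (m - k) (n - j)).eval t /
          (((m - k).factorial : ℝ) * ((n - j).factorial : ℝ)))) = S t m n := by
    rw [S, Finset.Nat.sum_antidiagonal_eq_sum_range_succ_mk]
    refine Finset.sum_congr rfl fun k hk => ?_
    rw [Finset.Nat.sum_antidiagonal_eq_sum_range_succ_mk]
    refine Finset.sum_congr rfl fun j hj => ?_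
    simp [f, hh]
  rw [conv1, key]
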